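/- (Centered principal components expansion.) Suppose additionally ∫ f² dμ < ∞ and μ(ℝ) > 0; set f̄ = (∫ f dμ) / μ(ℝ), and let f_LS denote the orthogonal projection in L²(μ) of f onto the linear span of 1, x, …, x^{n−1}. Then for every Lebesgue eigenbasis (ψ_i, λ_i) for (μ, f, n): ∫ (f − f_LS)² dμ = ∫ (f − f̄)² dμ − Σ_{i=0}^{n−1} (λ_i − f̄)² w^[i], where w^[i] = (∫ ψ_i dμ)². -/

import Mathlib

/-!
The identity holds with `f̄` replaced by any constant `m`. Since `f_LS - m` lies in the span of
the `ψ i` and `f - f_LS` is orthogonal to it, Pythagoras gives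
`‖f - m‖² = ‖f - f_LS‖² + ‖f_LS - m‖²`, and Parseval in the orthonormal basis `ψ` gives
`‖f_LS - m‖² = ∑ ⟪f - m, ψ i⟫²`. Expanding `1 = ∑ (∫ ψ j) ψ j` in that basis and using
`∫ ψ i ψ j f = λ i δ i j` yields `⟪f, ψ i⟫ = λ i ∫ ψ i`, so `⟪f - m, ψ i⟫ = (λ i - m) ∫ ψ i`.
-/

open MeasureTheory Polynomial

/-- A Lebesgue eigenbasis for `(μ, f, n)`: real polynomials `ψ i` of degree `≤ n-1`
and reals `lam i` with `∫ ψ i ψ j dμ = δ_{ij}` and `∫ ψ i ψ j f dμ = lam i δ_{ij}`. -/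
def LebesgueEigenbasis (μ : Measure ℝ) (f : ℝ → ℝ) (n : ℕ)
    (ψ : Fin n → Polynomial ℝ) (lam : Fin n → ℝ) : Prop :=
  (∀ i, (ψ i).natDegree ≤ n - 1) ∧
  (∀ i j, (∫ x, (ψ i).eval x * (ψ j).eval x ∂μ) = if i = j then 1 else 0) ∧
  (∀ i j, (∫ x, (ψ i).eval x * (ψ j).eval x * f x ∂μ) = if i = j then lam i else 0)

theorem Polynomial.mem_degreeLT_of_natDegree_le_pred {R : Type*} [Semiring R] {n : ℕ}
    {p : R[X]} (hn : 1 ≤ n) (hp : p.natDegree ≤ n - 1) : p ∈ degreeLT R n :=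
  mem_degreeLT.2 <| degree_le_natDegree.trans_lt <| by
    exact_mod_cast (by omega : p.natDegree < n)

theorem integral_add_sq_of_integral_mul_eq_zero {α : Type*} [MeasurableSpace α]
    {μ : Measure α} {u v : α → ℝ} (hu : MemLp u 2 μ) (hv : MemLp v 2 μ)
    (huv : ∫ x, u x * v x ∂μ = 0) :
    ∫ x, (u x + v x) ^ 2 ∂μ = ∫ x, u x ^ 2 ∂μ + ∫ x, v x ^ 2 ∂μ := by
  have huv' : Integrable (fun x => 2 * (u x * v x)) μ := (hu.integrable_mul hv).const_mul 2
  have hu' : Integrable (fun x => u x ^ 2 + 2 * (u x * v x)) μ := hu.integrable_sq.add huv'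
  calc ∫ x, (u x + v x) ^ 2 ∂μ = ∫ x, (u x ^ 2 + 2 * (u x * v x)) + v x ^ 2 ∂μ := by
        congr with x; ring
    _ = ∫ x, u x ^ 2 ∂μ + ∫ x, v x ^ 2 ∂μ := by
        rw [integral_add hu' hv.integrable_sq,
          integral_add hu.integrable_sq huv', integral_const_mul, huv]
        ring

section OrthonormalPolynomials

variable {μ : Measure ℝ} {n : ℕ} {ψ : Fin n → ℝ[X]}

theorem Polynomial.integrable_eval (hpow : ∀ k : ℕ, Integrable (fun x : ℝ => x ^ k) μ)
    (p : ℝ[X]) : Integrable (fun x => p.eval x) μ := by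
  induction p using Polynomial.induction_on' with
  | add p q hp hq => simp only [eval_add]; exact hp.add hq
  | monomial k a => simpa only [eval_monomial] using (hpow k).const_mul a

theorem Polynomial.memLp_two_eval (hpow : ∀ k : ℕ, Integrable (fun x : ℝ => x ^ k) μ)
    (p : ℝ[X]) : MemLp (fun x => p.eval x) 2 μ := by
  refine (memLp_two_iff_integrable_sq p.continuous.aestronglyMeasurable).2 ?_
  have h := integrable_eval hpow (p ^ 2)
  simp only [eval_pow] at h
  exact h

theorem integral_sum_smul_eval_mul (c : Fin n → ℝ) {g : ℝ → ℝ}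
    (hg : ∀ i, Integrable (fun x => (ψ i).eval x * g x) μ) :
    ∫ x, (∑ i, c i • ψ i).eval x * g x ∂μ = ∑ i, c i * ∫ x, (ψ i).eval x * g x ∂μ := by
  simp_rw [eval_finsetSum, eval_smul, smul_eq_mul, Finset.sum_mul, mul_assoc]
  rw [integral_finsetSum _ fun i _ => (hg i).const_mul (c i)]
  simp_rw [integral_const_mul]

theorem linearIndependent_of_integral_eval_mul_eval
    (hpow : ∀ k : ℕ, Integrable (fun x : ℝ => x ^ k) μ)
    (hψ : ∀ i j, ∫ x, (ψ i).eval x * (ψ j).eval x ∂μ = if i = j then 1 else 0) :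
    LinearIndependent ℝ ψ := by
  refine Fintype.linearIndependent_iff.2 fun c hc j => ?_
  have h := integral_sum_smul_eval_mul (μ := μ) c fun i =>
    (memLp_two_eval hpow (ψ i)).integrable_mul (memLp_two_eval hpow (ψ j))
  simpa [hc, hψ] using h.symm

theorem span_range_eq_degreeLT (hpow : ∀ k : ℕ, Integrable (fun x : ℝ => x ^ k) μ)
    (hψ : ∀ i j, ∫ x, (ψ i).eval x * (ψ j).eval x ∂μ = if i = j then 1 else 0)
    (hdeg : ∀ i, ψ i ∈ degreeLT ℝ n) :
    Submodule.span ℝ (Set.range ψ) = degreeLT ℝ n :=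
  Submodule.eq_of_le_of_finrank_eq (Submodule.span_le.2 (Set.range_subset_iff.2 hdeg)) <| by
    rw [finrank_span_eq_card (linearIndependent_of_integral_eval_mul_eval hpow hψ),
      Module.finrank_eq_card_basis (degreeLT.basis ℝ n)]

theorem eq_sum_integral_eval_mul_smul (hpow : ∀ k : ℕ, Integrable (fun x : ℝ => x ^ k) μ)
    (hψ : ∀ i j, ∫ x, (ψ i).eval x * (ψ j).eval x ∂μ = if i = j then 1 else 0)
    (hdeg : ∀ i, ψ i ∈ degreeLT ℝ n) {p : ℝ[X]} (hp : p ∈ degreeLT ℝ n) :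
    p = ∑ i, (∫ x, p.eval x * (ψ i).eval x ∂μ) • ψ i := by
  rw [← span_range_eq_degreeLT hpow hψ hdeg, Submodule.mem_span_range_iff_exists_fun] at hp
  obtain ⟨c, rfl⟩ := hp
  refine Finset.sum_congr rfl fun j _ => congrArg (· • ψ j) ?_
  rw [integral_sum_smul_eval_mul c fun i =>
    (memLp_two_eval hpow (ψ i)).integrable_mul (memLp_two_eval hpow (ψ j))]
  simp [hψ]

theorem integral_eval_sq_eq_sum (hpow : ∀ k : ℕ, Integrable (fun x : ℝ => x ^ k) μ)
    (hψ : ∀ i j, ∫ x, (ψ i).eval x * (ψ j).eval x ∂μ = if i = j then 1 else 0)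
    (hdeg : ∀ i, ψ i ∈ degreeLT ℝ n) {p : ℝ[X]} (hp : p ∈ degreeLT ℝ n) :
    ∫ x, p.eval x ^ 2 ∂μ = ∑ i, (∫ x, p.eval x * (ψ i).eval x ∂μ) ^ 2 := by
  have h := integral_sum_smul_eval_mul (fun i => ∫ x, p.eval x * (ψ i).eval x ∂μ) fun i =>
    (memLp_two_eval hpow (ψ i)).integrable_mul (memLp_two_eval hpow p)
  rw [← eq_sum_integral_eval_mul_smul hpow hψ hdeg hp] at h
  simp_rw [sq, h, mul_comm ((ψ _).eval _)]

end OrthonormalPolynomials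

namespace LebesgueEigenbasis

variable {μ : Measure ℝ} {n : ℕ} {f : ℝ → ℝ} {ψ : Fin n → ℝ[X]} {lam : Fin n → ℝ}

theorem integral_mul_eval_eq_mul_integral_eval (heb : LebesgueEigenbasis μ f n ψ lam)
    (hn : 1 ≤ n) (hpow : ∀ k : ℕ, Integrable (fun x : ℝ => x ^ k) μ) (hf : MemLp f 2 μ) (i : Fin n) :
    ∫ x, f x * (ψ i).eval x ∂μ = lam i * ∫ x, (ψ i).eval x ∂μ := by
  obtain ⟨hdeg, hψ, heig⟩ := heb
  have hdegLT i := mem_degreeLT_of_natDegree_le_pred hn (hdeg i)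
  have hone := eq_sum_integral_eval_mul_smul hpow hψ hdegLT
    (mem_degreeLT_of_natDegree_le_pred hn (natDegree_one.trans_le (Nat.zero_le _)))
  have h := integral_sum_smul_eval_mul (μ := μ) (ψ := ψ)
    (fun j => ∫ x, eval x 1 * (ψ j).eval x ∂μ) (g := fun x => (ψ i).eval x * f x) fun j =>
      ((memLp_two_eval hpow (ψ j * ψ i)).integrable_mul hf).congr <|
        ae_of_all _ fun x => by simp only [Pi.mul_apply, eval_mul, mul_assoc]
  rw [← hone] at h
  simp_rw [← mul_assoc, heig] at h
  simpa [mul_comm] using h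

theorem integral_sub_sq_eq_integral_sub_const_sq_sub (heb : LebesgueEigenbasis μ f n ψ lam)
    (hn : 1 ≤ n) (hpow : ∀ k : ℕ, Integrable (fun x : ℝ => x ^ k) μ) (hf : MemLp f 2 μ)
    {fLS : ℝ[X]} (hLSdeg : fLS.natDegree ≤ n - 1)
    (hLSproj : ∀ q : ℝ[X], q.natDegree ≤ n - 1 → ∫ x, (f x - fLS.eval x) * q.eval x ∂μ = 0)
    (m : ℝ) :
    ∫ x, (f x - fLS.eval x) ^ 2 ∂μ =
      ∫ x, (f x - m) ^ 2 ∂μ - ∑ i, (lam i - m) ^ 2 * (∫ x, (ψ i).eval x ∂μ) ^ 2 := by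
  have hresid : MemLp (fun x => f x - fLS.eval x) 2 μ := hf.sub (memLp_two_eval hpow fLS)
  have hdeg : (fLS - C m).natDegree ≤ n - 1 :=
    (natDegree_sub_le _ _).trans (max_le hLSdeg (natDegree_C m ▸ Nat.zero_le _))
  have hpyth : ∫ x, (f x - m) ^ 2 ∂μ =
      ∫ x, (f x - fLS.eval x) ^ 2 ∂μ + ∫ x, (fLS - C m).eval x ^ 2 ∂μ := by
    have h := integral_add_sq_of_integral_mul_eq_zero hresid (memLp_two_eval hpow (fLS - C m))
      (hLSproj _ hdeg)
    simpa only [eval_sub, eval_C, sub_add_sub_cancel] using h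
  have hcoef (i : Fin n) :
      ∫ x, (fLS - C m).eval x * (ψ i).eval x ∂μ = (lam i - m) * ∫ x, (ψ i).eval x ∂μ := by
    have hψi := memLp_two_eval hpow (ψ i)
    have hfψ : Integrable (fun x => f x * (ψ i).eval x) μ := hf.integrable_mul hψi
    have hmψ : Integrable (fun x => m * (ψ i).eval x) μ := (integrable_eval hpow (ψ i)).const_mul m
    have hcentered : Integrable (fun x => (f x - m) * (ψ i).eval x) μ := by
      simp_rw [sub_mul]; exact hfψ.sub hmψ
    have hresidψ : Integrable (fun x => (f x - fLS.eval x) * (ψ i).eval x) μ :=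
      hresid.integrable_mul hψi
    calc ∫ x, (fLS - C m).eval x * (ψ i).eval x ∂μ
        = ∫ x, (f x - m) * (ψ i).eval x - (f x - fLS.eval x) * (ψ i).eval x ∂μ := by
          congr with x; simp only [eval_sub, eval_C]; ring
      _ = ∫ x, (f x - m) * (ψ i).eval x ∂μ := by
          rw [integral_sub hcentered hresidψ, hLSproj _ (heb.1 i), sub_zero]
      _ = (lam i - m) * ∫ x, (ψ i).eval x ∂μ := by
          simp_rw [sub_mul]
          rw [integral_sub hfψ hmψ, integral_const_mul,
            heb.integral_mul_eval_eq_mul_integral_eval hn hpow hf i]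
  obtain ⟨hψdeg, hψ, -⟩ := heb
  have hψdegLT i := mem_degreeLT_of_natDegree_le_pred hn (hψdeg i)
  rw [hpyth, integral_eval_sq_eq_sum hpow hψ hψdegLT (mem_degreeLT_of_natDegree_le_pred hn hdeg)]
  simp_rw [hcoef, mul_pow, add_sub_cancel_right]

end LebesgueEigenbasis

theorem least_squares_residual_pca_centered_general (n : ℕ) (hn : 1 ≤ n) (μ : Measure ℝ)
    (hmom : ∀ k : ℕ, Integrable (fun x => |x| ^ k) μ)
    (f : ℝ → ℝ) (hf : Measurable f)
    (ψ : Fin n → Polynomial ℝ) (lam : Fin n → ℝ)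
    (heb : LebesgueEigenbasis μ f n ψ lam)
    (hf2 : Integrable (fun x => (f x) ^ 2) μ)
    (fLS : Polynomial ℝ) (hLSdeg : fLS.natDegree ≤ n - 1)
    (hLSproj : ∀ q : Polynomial ℝ, q.natDegree ≤ n - 1 →
      (∫ x, (f x - fLS.eval x) * q.eval x ∂μ) = 0) :
    (∫ x, (f x - fLS.eval x) ^ 2 ∂μ) =
      (∫ x, (f x - (∫ y, f y ∂μ) / (μ Set.univ).toReal) ^ 2 ∂μ) -
        ∑ i, (lam i - (∫ y, f y ∂μ) / (μ Set.univ).toReal) ^ 2 *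
          (∫ x, (ψ i).eval x ∂μ) ^ 2 := by
  have hpow (k : ℕ) : Integrable (fun x : ℝ => x ^ k) μ :=
    (integrable_norm_iff (by fun_prop)).1 (by simpa only [Real.norm_eq_abs, abs_pow] using hmom k)
  exact heb.integral_sub_sq_eq_integral_sub_const_sq_sub hn hpow
    ((memLp_two_iff_integrable_sq hf.aestronglyMeasurable).2 hf2) hLSdeg hLSproj _

/-- centered principal components expansion. -/
theorem least_squares_residual_pca_centered (n : ℕ) (hn : 1 ≤ n) (μ : Measure ℝ)
    (hmom : ∀ k : ℕ, Integrable (fun x => |x| ^ k) μ)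
    (hgram : (Matrix.of fun j k : Fin n => ∫ x, x ^ ((j : ℕ) + (k : ℕ)) ∂μ).PosDef)
    (f : ℝ → ℝ) (hf : Measurable f)
    (hfint : ∀ m ≤ 2 * n - 2, Integrable (fun x => f x * x ^ m) μ)
    (ψ : Fin n → Polynomial ℝ) (lam : Fin n → ℝ)
    (heb : LebesgueEigenbasis μ f n ψ lam)
    (hf2 : Integrable (fun x => (f x) ^ 2) μ)
    (hμpos : 0 < (μ Set.univ).toReal)
    (fLS : Polynomial ℝ) (hLSdeg : fLS.natDegree ≤ n - 1)
    (hLSproj : ∀ q : Polynomial ℝ, q.natDegree ≤ n - 1 →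
      (∫ x, (f x - fLS.eval x) * q.eval x ∂μ) = 0) :
    (∫ x, (f x - fLS.eval x) ^ 2 ∂μ) =
      (∫ x, (f x - (∫ y, f y ∂μ) / (μ Set.univ).toReal) ^ 2 ∂μ) -
        ∑ i, (lam i - (∫ y, f y ∂μ) / (μ Set.univ).toReal) ^ 2 *
          (∫ x, (ψ i).eval x ∂μ) ^ 2 :=
  least_squares_residual_pca_centered_general n hn μ hmom f hf ψ lam heb hf2 fLS hLSdeg hLSproj
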